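/- arXiv:2510.09937 — 3 statements merged into one kernel-verified Lean document; each statement's English description precedes it below -/
import Mathlib

section
/- Let Q : Ω → ℝ be a bounded measurable function and g : Ω → ℝ^n a bounded measurable vector-valued function on a probability space, and let δ be a real random variable independent of (Q, g) with mean 0 and variance σ². Then tVar((Q − δ)·g) = tVar(Q·g) + σ²·E[‖g‖²], where tVar denotes the trace of the covariance matrix. -/
open MeasureTheory ProbabilityTheory

/-- Total variance of a square-integrable random vector: `E‖Y‖² - ‖E Y‖²`. -/
noncomputable def tVar {Ω : Type*} [MeasureSpace Ω] {n : ℕ}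
    (Y : Ω → EuclideanSpace ℝ (Fin n)) : ℝ :=
  (∫ ω, ‖Y ω‖ ^ 2 ∂(ℙ : Measure Ω)) - ‖∫ ω, Y ω ∂(ℙ : Measure Ω)‖ ^ 2

/-- If `δ` has mean 0, variance `σ²` and is independent of the pair `(Q, g)`, then
`tVar ((Q - δ) • g) = tVar (Q • g) + σ² E‖g‖²`. -/
theorem total_variance_zero_mean_noise
    {Ω : Type*} [MeasureSpace Ω] [IsProbabilityMeasure (ℙ : Measure Ω)] {n : ℕ}
    (Q : Ω → ℝ) (g : Ω → EuclideanSpace ℝ (Fin n)) (δ : Ω → ℝ) (σ : ℝ)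
    (hQmeas : Measurable Q) (hgmeas : Measurable g) (hδmeas : Measurable δ)
    (CQ : ℝ) (hQbd : ∀ ω, |Q ω| ≤ CQ)
    (Cg : ℝ) (hgbd : ∀ ω, ‖g ω‖ ≤ Cg)
    (hδL2 : MemLp δ 2 (ℙ : Measure Ω))
    (hind : IndepFun δ (fun ω => (Q ω, g ω)) (ℙ : Measure Ω))
    (hmean : ∫ ω, δ ω ∂(ℙ : Measure Ω) = 0)
    (hvar : ∫ ω, (δ ω) ^ 2 ∂(ℙ : Measure Ω) = σ ^ 2) :
    tVar (fun ω => (Q ω - δ ω) • g ω)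
      = tVar (fun ω => Q ω • g ω) + σ ^ 2 * ∫ ω, ‖g ω‖ ^ 2 ∂(ℙ : Measure Ω) := by
  have hδint : Integrable δ (ℙ : Measure Ω) := hδL2.integrable (by norm_num)
  have hδ2int : Integrable (fun ω => δ ω ^ 2) (ℙ : Measure Ω) := by
    simpa [sq] using hδL2.integrable_sq
  have hg2bd : ∀ ω, ‖g ω‖ ^ 2 ≤ Cg ^ 2 := fun ω =>
    pow_le_pow_left₀ (norm_nonneg _) (hgbd ω) 2
  -- step 1: ∫ δ • g = 0
  have hδg_int : Integrable (fun ω => δ ω • g ω) (ℙ : Measure Ω) := by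
    refine Integrable.mono' (hδint.abs.const_mul Cg)
      ((hδmeas.smul hgmeas).aestronglyMeasurable) (ae_of_all _ fun ω => ?_)
    rw [norm_smul]
    calc ‖δ ω‖ * ‖g ω‖ ≤ ‖δ ω‖ * Cg :=
          mul_le_mul_of_nonneg_left (hgbd ω) (norm_nonneg _)
      _ = Cg * |δ ω| := by rw [Real.norm_eq_abs]; ring
  have hδg : ∫ ω, δ ω • g ω ∂(ℙ : Measure Ω) = 0 := by
    refine PiLp.ext fun i => ?_
    have hproj := (EuclideanSpace.proj (𝕜 := ℝ) i).integral_comp_comm hδg_int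
    have hcoord : (∫ ω, δ ω • g ω ∂(ℙ : Measure Ω)) i
        = ∫ ω, δ ω * g ω i ∂(ℙ : Measure Ω) := by
      simpa [PiLp.proj_apply] using hproj.symm
    have hpm : Measurable (fun p : ℝ × EuclideanSpace ℝ (Fin n) => p.2 i) :=
      ((EuclideanSpace.proj (𝕜 := ℝ) i).continuous.measurable).comp measurable_snd
    have hindc : IndepFun δ (fun ω => g ω i) (ℙ : Measure Ω) :=
      hind.comp measurable_id hpm
    rw [hcoord, hindc.integral_fun_mul_eq_mul_integral hδmeas.aestronglyMeasurable
      (hpm.comp (hQmeas.prodMk hgmeas)).aestronglyMeasurable, hmean, zero_mul]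
    simp
  -- mean terms agree
  have hQg_int : Integrable (fun ω => Q ω • g ω) (ℙ : Measure Ω) := by
    refine Integrable.mono' (integrable_const (CQ * Cg))
      ((hQmeas.smul hgmeas).aestronglyMeasurable) (ae_of_all _ fun ω => ?_)
    rw [norm_smul, Real.norm_eq_abs]
    exact mul_le_mul (hQbd ω) (hgbd ω) (norm_nonneg _) ((abs_nonneg _).trans (hQbd ω))
  have hmean_eq : ∫ ω, (Q ω - δ ω) • g ω ∂(ℙ : Measure Ω)
      = ∫ ω, Q ω • g ω ∂(ℙ : Measure Ω) := by
    have : (fun ω => (Q ω - δ ω) • g ω) = fun ω => Q ω • g ω - δ ω • g ω := by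
      funext ω; rw [sub_smul]
    rw [this, integral_sub hQg_int hδg_int, hδg, sub_zero]
  -- step 2: second moment terms
  have hgn : Measurable (fun ω => ‖g ω‖ ^ 2) := (hgmeas.norm).pow_const 2
  have hQg2bd : ∀ ω, |Q ω * ‖g ω‖ ^ 2| ≤ CQ * Cg ^ 2 := fun ω => by
    rw [abs_mul, abs_of_nonneg (sq_nonneg (‖g ω‖))]
    exact mul_le_mul (hQbd ω) (hg2bd ω) (sq_nonneg _) ((abs_nonneg _).trans (hQbd ω))
  have hint1 : Integrable (fun ω => Q ω ^ 2 * ‖g ω‖ ^ 2) (ℙ : Measure Ω) := by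
    refine Integrable.mono' (integrable_const (CQ ^ 2 * Cg ^ 2))
      ((hQmeas.pow_const 2).mul hgn).aestronglyMeasurable (ae_of_all _ fun ω => ?_)
    rw [Real.norm_eq_abs, abs_mul, abs_of_nonneg (sq_nonneg (Q ω)),
      abs_of_nonneg (sq_nonneg (‖g ω‖))]
    have hQ2 : Q ω ^ 2 ≤ CQ ^ 2 := by
      rw [← sq_abs]; exact pow_le_pow_left₀ (abs_nonneg _) (hQbd ω) 2
    exact mul_le_mul hQ2 (hg2bd ω) (sq_nonneg _) ((sq_nonneg (Q ω)).trans hQ2)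
  have hint2 : Integrable (fun ω => δ ω * (Q ω * ‖g ω‖ ^ 2)) (ℙ : Measure Ω) := by
    refine Integrable.mono' (hδint.abs.const_mul (CQ * Cg ^ 2))
      (hδmeas.mul (hQmeas.mul hgn)).aestronglyMeasurable (ae_of_all _ fun ω => ?_)
    rw [Real.norm_eq_abs, abs_mul, mul_comm (CQ * Cg ^ 2) |δ ω|]
    exact mul_le_mul_of_nonneg_left (hQg2bd ω) (abs_nonneg _)
  have hint3 : Integrable (fun ω => δ ω ^ 2 * ‖g ω‖ ^ 2) (ℙ : Measure Ω) := by
    refine Integrable.mono' (hδ2int.const_mul (Cg ^ 2))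
      ((hδmeas.pow_const 2).mul hgn).aestronglyMeasurable (ae_of_all _ fun ω => ?_)
    rw [Real.norm_eq_abs, abs_mul, abs_of_nonneg (sq_nonneg (δ ω)),
      abs_of_nonneg (sq_nonneg (‖g ω‖)), mul_comm (Cg ^ 2) (δ ω ^ 2)]
    exact mul_le_mul_of_nonneg_left (hg2bd ω) (sq_nonneg _)
  have hind2 : IndepFun δ (fun ω => Q ω * ‖g ω‖ ^ 2) (ℙ : Measure Ω) :=
    hind.comp measurable_id (measurable_fst.mul (measurable_snd.norm.pow_const 2))
  have hind3 : IndepFun (fun ω => δ ω ^ 2) (fun ω => ‖g ω‖ ^ 2) (ℙ : Measure Ω) :=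
    hind.comp (measurable_id.pow_const 2) (measurable_snd.norm.pow_const 2)
  have hI2 : ∫ ω, δ ω * (Q ω * ‖g ω‖ ^ 2) ∂(ℙ : Measure Ω) = 0 := by
    rw [hind2.integral_fun_mul_eq_mul_integral hδmeas.aestronglyMeasurable
      (hQmeas.mul hgn).aestronglyMeasurable, hmean, zero_mul]
  have hI3 : ∫ ω, δ ω ^ 2 * ‖g ω‖ ^ 2 ∂(ℙ : Measure Ω)
      = σ ^ 2 * ∫ ω, ‖g ω‖ ^ 2 ∂(ℙ : Measure Ω) := by
    rw [hind3.integral_fun_mul_eq_mul_integral (hδmeas.pow_const 2).aestronglyMeasurable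
      hgn.aestronglyMeasurable, hvar]
  have hsq : ∀ (c : ℝ) (ω : Ω), ‖c • g ω‖ ^ 2 = c ^ 2 * ‖g ω‖ ^ 2 := fun c ω => by
    rw [norm_smul, mul_pow, Real.norm_eq_abs, sq_abs]
  have hsnd : ∫ ω, ‖(Q ω - δ ω) • g ω‖ ^ 2 ∂(ℙ : Measure Ω)
      = (∫ ω, ‖Q ω • g ω‖ ^ 2 ∂(ℙ : Measure Ω))
        + σ ^ 2 * ∫ ω, ‖g ω‖ ^ 2 ∂(ℙ : Measure Ω) := by
    have heq : (fun ω => ‖(Q ω - δ ω) • g ω‖ ^ 2)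
        = fun ω => (Q ω ^ 2 * ‖g ω‖ ^ 2 - 2 * (δ ω * (Q ω * ‖g ω‖ ^ 2)))
          + δ ω ^ 2 * ‖g ω‖ ^ 2 := by
      funext ω; rw [hsq]; ring
    have hmul2 : Integrable (fun ω => 2 * (δ ω * (Q ω * ‖g ω‖ ^ 2))) (ℙ : Measure Ω) :=
      hint2.const_mul 2
    have hsub : Integrable
        (fun ω => Q ω ^ 2 * ‖g ω‖ ^ 2 - 2 * (δ ω * (Q ω * ‖g ω‖ ^ 2)))
        (ℙ : Measure Ω) := hint1.sub hmul2
    rw [heq, integral_add hsub hint3, integral_sub hint1 hmul2,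
      integral_const_mul, hI2, hI3]
    have : (fun ω => ‖Q ω • g ω‖ ^ 2) = fun ω => Q ω ^ 2 * ‖g ω‖ ^ 2 := by
      funext ω; rw [hsq]
    rw [this]; ring
  simp only [tVar, hsnd, hmean_eq]; ring
end

section
/- With the setup of the previous statement (A = (A₁, A₂) conditionally independent given S, Q̂(s,a₁) = E[Q(s,a₁,A₂)|S=s], g depending only on (S,A₁)), the following identity holds: tVar(Q(S,A)·g(S,A₁)) − tVar(Q̂(S,A₁)·g(S,A₁)) = E[(Q(S,A) − Q̂(S,A₁))²·‖g(S,A₁)‖²]. -/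
open MeasureTheory ProbabilityTheory

section Aux

open MeasurableSpace Set

variable {Ω : Type*} [hΩ : MeasureSpace Ω] [IsProbabilityMeasure (ℙ : Measure Ω)]
  {𝒮 𝒜₁ 𝒜₂ : Type*} [MeasurableSpace 𝒮] [MeasurableSpace 𝒜₁] [MeasurableSpace 𝒜₂]

/-- Factorization of the law of `((S,A₁),A₂)` through the conditional distribution of `A₂`
given `S`, under conditional independence of `A₁, A₂` given `S`. -/
lemma aux_hmeq [StandardBorelSpace Ω] [Nonempty Ω] [StandardBorelSpace 𝒜₂] [Nonempty 𝒜₂]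
    (S : Ω → 𝒮) (A₁ : Ω → 𝒜₁) (A₂ : Ω → 𝒜₂)
    (hS : Measurable S) (hA₁ : Measurable A₁) (hA₂ : Measurable A₂)
    (hci : CondIndepFun (MeasurableSpace.comap S inferInstance) (hS.comap_le) A₁ A₂ ℙ) :
    (ℙ : Measure Ω).map (fun ω => ((S ω, A₁ ω), A₂ ω))
      = ((ℙ : Measure Ω).map (fun ω => (S ω, A₁ ω)))
          ⊗ₘ ((condDistrib A₂ S ℙ).comap Prod.fst measurable_fst) := by
  have hmS : MeasurableSpace.comap S inferInstance ≤ hΩ.toMeasurableSpace := hS.comap_le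
  set κ : Kernel 𝒮 𝒜₂ := condDistrib A₂ S ℙ with hκdef
  set κ' : Kernel (𝒮 × 𝒜₁) 𝒜₂ := κ.comap Prod.fst measurable_fst with hκ'
  set ν : Measure (𝒮 × 𝒜₁) := (ℙ : Measure Ω).map (fun ω => (S ω, A₁ ω)) with hν
  have hSA : Measurable fun ω => (S ω, A₁ ω) := hS.prodMk hA₁
  have hg3 : Measurable fun ω => ((S ω, A₁ ω), A₂ ω) := hSA.prodMk hA₂
  haveI : IsProbabilityMeasure ν := Measure.isProbabilityMeasure_map hSA.aemeasurable
  -- the key rectangle identity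
  have key : ∀ (v : Set 𝒮) (w : Set 𝒜₁) (t : Set 𝒜₂), MeasurableSet v → MeasurableSet w →
      MeasurableSet t →
      (ℙ : Measure Ω) ((S ⁻¹' v ∩ A₁ ⁻¹' w) ∩ A₂ ⁻¹' t)
        = ∫⁻ ω in S ⁻¹' v ∩ A₁ ⁻¹' w, κ (S ω) t ∂(ℙ : Measure Ω) := by
    intro v w t hv hw ht
    have hmeas_k : Measurable fun ω => κ (S ω) t := (Kernel.measurable_coe κ ht).comp hS
    have hfin2 : ∫⁻ ω in S ⁻¹' v ∩ A₁ ⁻¹' w, κ (S ω) t ∂(ℙ : Measure Ω) ≠ ⊤ := by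
      refine ne_of_lt (lt_of_le_of_lt ?_ (measure_lt_top ℙ (S ⁻¹' v ∩ A₁ ⁻¹' w)))
      calc ∫⁻ ω in S ⁻¹' v ∩ A₁ ⁻¹' w, κ (S ω) t ∂(ℙ : Measure Ω)
          ≤ ∫⁻ _ω in S ⁻¹' v ∩ A₁ ⁻¹' w, 1 ∂(ℙ : Measure Ω) :=
            lintegral_mono fun ω => prob_le_one
        _ = (ℙ : Measure Ω) (S ⁻¹' v ∩ A₁ ⁻¹' w) := setLIntegral_one _
    rw [← ENNReal.toReal_eq_toReal_iff' (measure_ne_top _ _) hfin2]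
    -- move to Bochner integrals
    have hRHS : (∫⁻ ω in S ⁻¹' v ∩ A₁ ⁻¹' w, κ (S ω) t ∂(ℙ : Measure Ω)).toReal
        = ∫ ω in S ⁻¹' v ∩ A₁ ⁻¹' w, (κ (S ω) t).toReal ∂(ℙ : Measure Ω) := by
      rw [integral_toReal (hmeas_k.aemeasurable) (Filter.Eventually.of_forall fun ω =>
        measure_lt_top _ _)]
    rw [hRHS]
    -- conditional expectations
    set h : Ω → ℝ := (ℙ : Measure Ω)[(A₂ ⁻¹' t).indicator (fun _ => (1:ℝ)) | MeasurableSpace.comap S inferInstance] with hh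
    set hw1 : Ω → ℝ := (ℙ : Measure Ω)[(A₁ ⁻¹' w).indicator (fun _ => (1:ℝ)) | MeasurableSpace.comap S inferInstance] with hhw
    have hcd : (fun ω => (κ (S ω) t).toReal) =ᵐ[(ℙ : Measure Ω)] h :=
      condDistrib_ae_eq_condExp hS hA₂ ht
    have hvmS : MeasurableSet[MeasurableSpace.comap S inferInstance] (S ⁻¹' v) := ⟨v, hv, rfl⟩
    -- RHS chain
    have r1 : ∫ ω in S ⁻¹' v ∩ A₁ ⁻¹' w, (κ (S ω) t).toReal ∂(ℙ : Measure Ω)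
        = ∫ ω in S ⁻¹' v ∩ A₁ ⁻¹' w, h ω ∂(ℙ : Measure Ω) :=
      integral_congr_ae (ae_restrict_of_ae hcd)
    set F : Ω → ℝ := (S ⁻¹' v).indicator h with hF
    set iw : Ω → ℝ := (A₁ ⁻¹' w).indicator (fun _ => (1:ℝ)) with hiw
    have r2 : ∫ ω in S ⁻¹' v ∩ A₁ ⁻¹' w, h ω ∂(ℙ : Measure Ω)
        = ∫ ω, F ω * iw ω ∂(ℙ : Measure Ω) := by
      rw [← integral_indicator ((hS hv).inter (hA₁ hw))]
      refine integral_congr_ae (Filter.Eventually.of_forall fun ω => ?_)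
      by_cases h1 : ω ∈ S ⁻¹' v <;> by_cases h2 : ω ∈ A₁ ⁻¹' w <;>
        simp [hF, hiw, Set.indicator_apply, h1, h2]
    have hFsm : StronglyMeasurable[MeasurableSpace.comap S inferInstance] F :=
      stronglyMeasurable_condExp.indicator hvmS
    have hbdh : ∀ᵐ ω ∂(ℙ : Measure Ω), |h ω| ≤ ((1 : NNReal) : ℝ) := by
      refine ae_bdd_condExp_of_ae_bdd (Filter.Eventually.of_forall fun ω => ?_)
      by_cases h2 : ω ∈ A₂ ⁻¹' t <;> simp [Set.indicator_apply, h2]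
    have hbdF : ∀ᵐ ω ∂(ℙ : Measure Ω), ‖F ω‖ ≤ 1 := by
      filter_upwards [hbdh] with ω hω
      rw [hF, Real.norm_eq_abs]
      by_cases h1 : ω ∈ S ⁻¹' v
      · rw [Set.indicator_of_mem h1]; simpa using hω
      · rw [Set.indicator_of_notMem h1]; norm_num
    have hiw_int : Integrable iw (ℙ : Measure Ω) :=
      (integrable_const (1:ℝ)).indicator (hA₁ hw)
    have r3 : ∫ ω, F ω * iw ω ∂(ℙ : Measure Ω)
        = ∫ ω, F ω * hw1 ω ∂(ℙ : Measure Ω) := by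
      rw [← integral_condExp hmS (f := fun ω => F ω * iw ω)]
      refine integral_congr_ae ?_
      exact condExp_stronglyMeasurable_mul_of_bound hmS hFsm hiw_int 1 hbdF
    have r4 : ∫ ω, F ω * hw1 ω ∂(ℙ : Measure Ω)
        = ∫ ω in S ⁻¹' v, h ω * hw1 ω ∂(ℙ : Measure Ω) := by
      rw [← integral_indicator (hS hv)]
      refine integral_congr_ae (Filter.Eventually.of_forall fun ω => ?_)
      by_cases h1 : ω ∈ S ⁻¹' v <;> simp [hF, Set.indicator_apply, h1]
    -- LHS chain
    have l1 : ((ℙ : Measure Ω) ((S ⁻¹' v ∩ A₁ ⁻¹' w) ∩ A₂ ⁻¹' t)).toReal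
        = ∫ ω in S ⁻¹' v, (A₁ ⁻¹' w ∩ A₂ ⁻¹' t).indicator (fun _ => (1:ℝ)) ω
            ∂(ℙ : Measure Ω) := by
      rw [setIntegral_indicator ((hA₁ hw).inter (hA₂ ht))]
      rw [Set.inter_assoc]
      simp [Measure.restrict_apply, measureReal_def]
    have hind_int : Integrable ((A₁ ⁻¹' w ∩ A₂ ⁻¹' t).indicator (fun _ => (1:ℝ)))
        (ℙ : Measure Ω) := (integrable_const (1:ℝ)).indicator ((hA₁ hw).inter (hA₂ ht))
    have l2 : ∫ ω in S ⁻¹' v, (A₁ ⁻¹' w ∩ A₂ ⁻¹' t).indicator (fun _ => (1:ℝ)) ω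
            ∂(ℙ : Measure Ω)
        = ∫ ω in S ⁻¹' v,
            ((ℙ : Measure Ω)[(A₁ ⁻¹' w ∩ A₂ ⁻¹' t).indicator (fun _ => (1:ℝ)) | MeasurableSpace.comap S inferInstance]) ω
            ∂(ℙ : Measure Ω) :=
      (setIntegral_condExp hmS hind_int hvmS).symm
    have hci' := (condIndepFun_iff_condExp_inter_preimage_eq_mul hA₁ hA₂).mp hci w t hw ht
    have l3 : ∫ ω in S ⁻¹' v,
            ((ℙ : Measure Ω)[(A₁ ⁻¹' w ∩ A₂ ⁻¹' t).indicator (fun _ => (1:ℝ)) | MeasurableSpace.comap S inferInstance]) ω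
            ∂(ℙ : Measure Ω)
        = ∫ ω in S ⁻¹' v, hw1 ω * h ω ∂(ℙ : Measure Ω) :=
      integral_congr_ae (ae_restrict_of_ae hci')
    rw [l1, l2, l3, r1, r2, r3, r4]
    refine integral_congr_ae (Filter.Eventually.of_forall fun ω => ?_)
    ring
  -- now the π-system argument
  haveI : IsProbabilityMeasure ((ℙ : Measure Ω).map (fun ω => ((S ω, A₁ ω), A₂ ω))) :=
    Measure.isProbabilityMeasure_map hg3.aemeasurable
  haveI : IsFiniteMeasure (ν ⊗ₘ κ') := by
    constructor
    rw [Measure.compProd_apply_univ]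
    exact measure_lt_top _ _
  have hCspan : IsCountablySpanning (Set.image2 (· ×ˢ ·) {s : Set 𝒮 | MeasurableSet s}
      {s : Set 𝒜₁ | MeasurableSet s}) := by
    refine ⟨fun _ => Set.univ ×ˢ Set.univ, fun _ =>
      Set.mem_image2_of_mem MeasurableSet.univ MeasurableSet.univ,
      by simp [Set.iUnion_const]⟩
  have hgen : (inferInstance : MeasurableSpace ((𝒮 × 𝒜₁) × 𝒜₂))
      = MeasurableSpace.generateFrom (Set.image2 (· ×ˢ ·)
          (Set.image2 (· ×ˢ ·) {s : Set 𝒮 | MeasurableSet s} {s : Set 𝒜₁ | MeasurableSet s})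
          {s : Set 𝒜₂ | MeasurableSet s}) := by
    exact (generateFrom_eq_prod generateFrom_prod MeasurableSpace.generateFrom_measurableSet
      hCspan isCountablySpanning_measurableSet).symm
  refine MeasureTheory.ext_of_generate_finite _ hgen ?_ ?_ ?_
  · exact IsPiSystem.prod (isPiSystem_prod) isPiSystem_measurableSet
  · rintro u ⟨u', hu', t, ht, rfl⟩
    obtain ⟨v, hv, w, hw, rfl⟩ := hu'
    have hv : MeasurableSet v := hv
    have hw : MeasurableSet w := hw
    have ht : MeasurableSet t := ht
    have hL : (ℙ : Measure Ω).map (fun ω => ((S ω, A₁ ω), A₂ ω)) ((v ×ˢ w) ×ˢ t)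
        = (ℙ : Measure Ω) ((S ⁻¹' v ∩ A₁ ⁻¹' w) ∩ A₂ ⁻¹' t) := by
      have hset : (fun ω => ((S ω, A₁ ω), A₂ ω)) ⁻¹' ((v ×ˢ w) ×ˢ t)
          = (S ⁻¹' v ∩ A₁ ⁻¹' w) ∩ A₂ ⁻¹' t := by
        ext ω; simp [and_assoc]
      rw [Measure.map_apply hg3 (((hv.prod hw)).prod ht), hset]
    have hR : (ν ⊗ₘ κ') ((v ×ˢ w) ×ˢ t)
        = ∫⁻ ω in S ⁻¹' v ∩ A₁ ⁻¹' w, κ (S ω) t ∂(ℙ : Measure Ω) := by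
      rw [Measure.compProd_apply_prod (hv.prod hw) ht]
      have : ∀ p : 𝒮 × 𝒜₁, κ' p t = κ p.1 t := fun p => by rw [hκ', Kernel.comap_apply]
      rw [show (fun p : 𝒮 × 𝒜₁ => κ' p t) = fun p => κ p.1 t from funext this]
      have hk1 : Measurable fun p : 𝒮 × 𝒜₁ => κ p.1 t :=
        (Kernel.measurable_coe κ ht).comp measurable_fst
      have hset2 : (fun ω => (S ω, A₁ ω)) ⁻¹' (v ×ˢ w) = S ⁻¹' v ∩ A₁ ⁻¹' w := by
        ext ω; simp
      rw [hν, setLIntegral_map (hv.prod hw) hk1 hSA, hset2]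
    rw [hL, hR]
    exact key v w t hv hw ht
  · simp

/-- If the law of `((S,A₁),A₂)` factorizes via a kernel `κ` from `𝒮`, then
`E[Q(S,A₁,A₂) • f(S,A₁)] = E[(∫ Q dκ(S)) • f(S,A₁)]` for bounded measurable `f`. -/
lemma aux_integral_eq {F : Type*} [NormedAddCommGroup F] [NormedSpace ℝ F] [CompleteSpace F]
    (S : Ω → 𝒮) (A₁ : Ω → 𝒜₁) (A₂ : Ω → 𝒜₂)
    (hS : Measurable S) (hA₁ : Measurable A₁) (hA₂ : Measurable A₂)
    (κ : Kernel 𝒮 𝒜₂) [IsMarkovKernel κ]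
    (hmeq : (ℙ : Measure Ω).map (fun ω => ((S ω, A₁ ω), A₂ ω))
      = ((ℙ : Measure Ω).map (fun ω => (S ω, A₁ ω))) ⊗ₘ (κ.comap Prod.fst measurable_fst))
    (Q : 𝒮 → 𝒜₁ → 𝒜₂ → ℝ)
    (hQmeas : Measurable fun p : 𝒮 × 𝒜₁ × 𝒜₂ => Q p.1 p.2.1 p.2.2)
    (CQ : ℝ) (hCQ : 0 ≤ CQ) (hQbd : ∀ s a₁ a₂, |Q s a₁ a₂| ≤ CQ)
    (f : 𝒮 × 𝒜₁ → F) (hf : StronglyMeasurable f) (Cf : ℝ) (hfb : ∀ p, ‖f p‖ ≤ Cf) :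
    ∫ ω, Q (S ω) (A₁ ω) (A₂ ω) • f (S ω, A₁ ω) ∂(ℙ : Measure Ω)
      = ∫ ω, (∫ a₂, Q (S ω) (A₁ ω) a₂ ∂κ (S ω)) • f (S ω, A₁ ω) ∂(ℙ : Measure Ω) := by
  set κ' : Kernel (𝒮 × 𝒜₁) 𝒜₂ := κ.comap Prod.fst measurable_fst with hκ'
  set ν : Measure (𝒮 × 𝒜₁) := (ℙ : Measure Ω).map (fun ω => (S ω, A₁ ω)) with hν
  have hSA : Measurable fun ω => (S ω, A₁ ω) := hS.prodMk hA₁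
  have hg3 : Measurable fun ω => ((S ω, A₁ ω), A₂ ω) := hSA.prodMk hA₂
  haveI : IsProbabilityMeasure ν := Measure.isProbabilityMeasure_map hSA.aemeasurable
  have hQ' : Measurable fun x : (𝒮 × 𝒜₁) × 𝒜₂ => Q x.1.1 x.1.2 x.2 := by
    have : (fun x : (𝒮 × 𝒜₁) × 𝒜₂ => Q x.1.1 x.1.2 x.2)
        = (fun p : 𝒮 × 𝒜₁ × 𝒜₂ => Q p.1 p.2.1 p.2.2) ∘ (fun x => (x.1.1, (x.1.2, x.2))) := rfl
    rw [this]
    exact hQmeas.comp ((measurable_fst.fst).prodMk ((measurable_fst.snd).prodMk measurable_snd))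
  set Φ : (𝒮 × 𝒜₁) × 𝒜₂ → F := fun x => Q x.1.1 x.1.2 x.2 • f x.1 with hΦ
  have hΦsm : StronglyMeasurable Φ :=
    hQ'.stronglyMeasurable.smul (hf.comp_measurable measurable_fst)
  have hΦbd : ∀ x, ‖Φ x‖ ≤ CQ * Cf := by
    intro x
    rw [hΦ, norm_smul]
    exact mul_le_mul (by simpa [Real.norm_eq_abs] using hQbd _ _ _) (hfb _) (norm_nonneg _) hCQ
  have hΦint : Integrable Φ (ν ⊗ₘ κ') := by
    haveI : IsFiniteMeasure (ν ⊗ₘ κ') := by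
      constructor
      rw [Measure.compProd_apply_univ]
      exact measure_lt_top _ _
    exact (integrable_const (CQ * Cf)).mono' hΦsm.aestronglyMeasurable
      (Filter.Eventually.of_forall hΦbd)
  have h1 : ∫ ω, Q (S ω) (A₁ ω) (A₂ ω) • f (S ω, A₁ ω) ∂(ℙ : Measure Ω)
      = ∫ x, Φ x ∂((ℙ : Measure Ω).map (fun ω => ((S ω, A₁ ω), A₂ ω))) :=
    (integral_map hg3.aemeasurable hΦsm.aestronglyMeasurable).symm
  have h2 : ∫ x, Φ x ∂((ℙ : Measure Ω).map (fun ω => ((S ω, A₁ ω), A₂ ω)))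
      = ∫ p, ∫ a₂, Φ (p, a₂) ∂κ' p ∂ν := by
    rw [hmeq]; exact Measure.integral_compProd hΦint
  have h3 : ∀ p : 𝒮 × 𝒜₁, ∫ a₂, Φ (p, a₂) ∂κ' p
      = (∫ a₂, Q p.1 p.2 a₂ ∂κ p.1) • f p := by
    intro p
    rw [hκ', Kernel.comap_apply]
    simpa [hΦ] using integral_smul_const (fun a₂ => Q p.1 p.2 a₂) (f p)
  have hsm2 : StronglyMeasurable fun p : 𝒮 × 𝒜₁ => (∫ a₂, Q p.1 p.2 a₂ ∂κ p.1) • f p := by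
    have : StronglyMeasurable fun p : 𝒮 × 𝒜₁ => ∫ a₂, Q p.1 p.2 a₂ ∂κ' p :=
      hQ'.stronglyMeasurable.integral_kernel_prod_right'
    have heq : (fun p : 𝒮 × 𝒜₁ => ∫ a₂, Q p.1 p.2 a₂ ∂κ p.1)
        = fun p : 𝒮 × 𝒜₁ => ∫ a₂, Q p.1 p.2 a₂ ∂κ' p := by
      funext p; rw [hκ', Kernel.comap_apply]
    have h5 := this.smul hf
    exact h5
  have h4 : ∫ p, (∫ a₂, Q p.1 p.2 a₂ ∂κ p.1) • f p ∂ν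
      = ∫ ω, (∫ a₂, Q (S ω) (A₁ ω) a₂ ∂κ (S ω)) • f (S ω, A₁ ω) ∂(ℙ : Measure Ω) :=
    integral_map hSA.aemeasurable hsm2.aestronglyMeasurable
  rw [h1, h2, ← h4]
  exact integral_congr_ae (Filter.Eventually.of_forall h3)

end Aux

/-- With `A₁, A₂` conditionally independent given `S`,
`Q̂(s,a₁) = E[Q(s,a₁,A₂) | S = s]`, and `g` depending only on `(S, A₁)`:
`tVar (Q(S,A) • g) − tVar (Q̂(S,A₁) • g) = E[(Q − Q̂)² ‖g‖²]`. -/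
theorem total_variance_gap_eq_expected_sq_advantage
    {Ω : Type*} [hΩ : MeasureSpace Ω] [StandardBorelSpace Ω] [Nonempty Ω]
    [IsProbabilityMeasure (ℙ : Measure Ω)]
    {𝒮 𝒜₁ 𝒜₂ : Type*} [MeasurableSpace 𝒮] [MeasurableSpace 𝒜₁] [MeasurableSpace 𝒜₂]
    [StandardBorelSpace 𝒜₂] [Nonempty 𝒜₂] {n : ℕ}
    (S : Ω → 𝒮) (A₁ : Ω → 𝒜₁) (A₂ : Ω → 𝒜₂)
    (hS : Measurable S) (hA₁ : Measurable A₁) (hA₂ : Measurable A₂)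
    (Q : 𝒮 → 𝒜₁ → 𝒜₂ → ℝ) (g : 𝒮 → 𝒜₁ → EuclideanSpace ℝ (Fin n))
    (hQmeas : Measurable fun p : 𝒮 × 𝒜₁ × 𝒜₂ => Q p.1 p.2.1 p.2.2)
    (hgmeas : Measurable fun p : 𝒮 × 𝒜₁ => g p.1 p.2)
    (CQ : ℝ) (hQbd : ∀ s a₁ a₂, |Q s a₁ a₂| ≤ CQ)
    (Cg : ℝ) (hgbd : ∀ s a₁, ‖g s a₁‖ ≤ Cg)
    (hci : CondIndepFun (MeasurableSpace.comap S inferInstance) (hS.comap_le) A₁ A₂ ℙ)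
    (Qhat : 𝒮 → 𝒜₁ → ℝ)
    (hQhat : ∀ s a₁, Qhat s a₁ = ∫ a₂, Q s a₁ a₂ ∂(condDistrib A₂ S ℙ s)) :
    tVar (fun ω => Q (S ω) (A₁ ω) (A₂ ω) • g (S ω) (A₁ ω))
      - tVar (fun ω => Qhat (S ω) (A₁ ω) • g (S ω) (A₁ ω))
      = ∫ ω, (Q (S ω) (A₁ ω) (A₂ ω) - Qhat (S ω) (A₁ ω)) ^ 2
          * ‖g (S ω) (A₁ ω)‖ ^ 2 ∂(ℙ : Measure Ω) := by
  obtain ⟨ω₀⟩ := (inferInstance : Nonempty Ω)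
  have hCQ : 0 ≤ CQ := (abs_nonneg _).trans (hQbd (S ω₀) (A₁ ω₀) (A₂ ω₀))
  have hCg : 0 ≤ Cg := (norm_nonneg _).trans (hgbd (S ω₀) (A₁ ω₀))
  have hmeq := aux_hmeq S A₁ A₂ hS hA₁ hA₂ hci
  have hQ' : Measurable fun x : (𝒮 × 𝒜₁) × 𝒜₂ => Q x.1.1 x.1.2 x.2 := by
    have : (fun x : (𝒮 × 𝒜₁) × 𝒜₂ => Q x.1.1 x.1.2 x.2)
        = (fun p : 𝒮 × 𝒜₁ × 𝒜₂ => Q p.1 p.2.1 p.2.2) ∘ (fun x => (x.1.1, (x.1.2, x.2))) := rfl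
    rw [this]
    exact hQmeas.comp ((measurable_fst.fst).prodMk ((measurable_fst.snd).prodMk measurable_snd))
  have hQhm : Measurable fun p : 𝒮 × 𝒜₁ => Qhat p.1 p.2 := by
    set κ' : Kernel (𝒮 × 𝒜₁) 𝒜₂ := (condDistrib A₂ S ℙ).comap Prod.fst measurable_fst with hκ'
    have hsm : StronglyMeasurable fun p : 𝒮 × 𝒜₁ => ∫ y, Q p.1 p.2 y ∂κ' p :=
      hQ'.stronglyMeasurable.integral_kernel_prod_right'
    have heq : (fun p : 𝒮 × 𝒜₁ => Qhat p.1 p.2)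
        = fun p : 𝒮 × 𝒜₁ => ∫ y, Q p.1 p.2 y ∂κ' p :=
      funext fun p => hQhat p.1 p.2
    rw [heq]
    exact hsm.measurable
  have hQhbd : ∀ s a₁, |Qhat s a₁| ≤ CQ := by
    intro s a₁
    rw [hQhat]
    calc |∫ a₂, Q s a₁ a₂ ∂(condDistrib A₂ S ℙ) s|
        ≤ CQ * ((condDistrib A₂ S ℙ) s Set.univ).toReal := by
          simpa [Real.norm_eq_abs] using norm_integral_le_of_norm_le_const
            (μ := (condDistrib A₂ S ℙ) s) (f := fun a₂ => Q s a₁ a₂) (C := CQ)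
            (Filter.Eventually.of_forall fun a₂ => by
              simpa [Real.norm_eq_abs] using hQbd s a₁ a₂)
      _ = CQ := by simp
  -- fact (1), vector version
  have e1 : ∫ ω, Q (S ω) (A₁ ω) (A₂ ω) • g (S ω) (A₁ ω) ∂(ℙ : Measure Ω)
      = ∫ ω, Qhat (S ω) (A₁ ω) • g (S ω) (A₁ ω) ∂(ℙ : Measure Ω) := by
    have := aux_integral_eq S A₁ A₂ hS hA₁ hA₂ (condDistrib A₂ S ℙ) hmeq Q hQmeas CQ hCQ hQbd
      (fun p : 𝒮 × 𝒜₁ => g p.1 p.2) hgmeas.stronglyMeasurable Cg (fun p => hgbd p.1 p.2)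
    simp only [← hQhat] at this
    exact this
  -- fact (1), scalar version with f = Q̂ ‖g‖²
  have e2 : ∫ ω, Q (S ω) (A₁ ω) (A₂ ω) * (Qhat (S ω) (A₁ ω) * ‖g (S ω) (A₁ ω)‖ ^ 2)
        ∂(ℙ : Measure Ω)
      = ∫ ω, Qhat (S ω) (A₁ ω) * (Qhat (S ω) (A₁ ω) * ‖g (S ω) (A₁ ω)‖ ^ 2)
        ∂(ℙ : Measure Ω) := by
    have hfm : Measurable fun p : 𝒮 × 𝒜₁ => Qhat p.1 p.2 * ‖g p.1 p.2‖ ^ 2 :=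
      hQhm.mul (hgmeas.norm.pow_const 2)
    have hfb : ∀ p : 𝒮 × 𝒜₁, ‖Qhat p.1 p.2 * ‖g p.1 p.2‖ ^ 2‖ ≤ CQ * Cg ^ 2 := by
      intro p
      rw [Real.norm_eq_abs, abs_mul, abs_of_nonneg (by positivity : (0:ℝ) ≤ ‖g p.1 p.2‖ ^ 2)]
      exact mul_le_mul (hQhbd _ _) (pow_le_pow_left₀ (norm_nonneg _) (hgbd p.1 p.2) 2)
        (by positivity) hCQ
    have := aux_integral_eq S A₁ A₂ hS hA₁ hA₂ (condDistrib A₂ S ℙ) hmeq Q hQmeas CQ hCQ hQbd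
      (fun p : 𝒮 × 𝒜₁ => Qhat p.1 p.2 * ‖g p.1 p.2‖ ^ 2) hfm.stronglyMeasurable
      (CQ * Cg ^ 2) hfb
    simp only [smul_eq_mul, ← hQhat] at this
    exact this
  -- integrability helper
  have intb : ∀ (f : Ω → ℝ) (C : ℝ), Measurable f → (∀ ω, |f ω| ≤ C) →
      Integrable f (ℙ : Measure Ω) := fun f C hm hb =>
    (integrable_const C).mono' hm.aestronglyMeasurable
      (Filter.Eventually.of_forall fun ω => by simpa [Real.norm_eq_abs] using hb ω)
  have hqm : Measurable fun ω => Q (S ω) (A₁ ω) (A₂ ω) :=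
    hQmeas.comp (hS.prodMk (hA₁.prodMk hA₂))
  have hqhm : Measurable fun ω => Qhat (S ω) (A₁ ω) := hQhm.comp (hS.prodMk hA₁)
  have hGnm : Measurable fun ω => ‖g (S ω) (A₁ ω)‖ ^ 2 :=
    (hgmeas.comp (hS.prodMk hA₁)).norm.pow_const 2
  have bGn : ∀ ω, ‖g (S ω) (A₁ ω)‖ ^ 2 ≤ Cg ^ 2 :=
    fun ω => pow_le_pow_left₀ (norm_nonneg _) (hgbd _ _) 2
  have i1 : Integrable (fun ω => Q (S ω) (A₁ ω) (A₂ ω) ^ 2 * ‖g (S ω) (A₁ ω)‖ ^ 2)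
      (ℙ : Measure Ω) := by
    refine intb _ (CQ ^ 2 * Cg ^ 2) ((hqm.pow_const 2).mul hGnm) fun ω => ?_
    rw [abs_mul, abs_pow, abs_of_nonneg (by positivity : (0:ℝ) ≤ ‖g (S ω) (A₁ ω)‖ ^ 2)]
    exact mul_le_mul (pow_le_pow_left₀ (abs_nonneg _) (hQbd _ _ _) 2) (bGn ω)
      (by positivity) (by positivity)
  have i2 : Integrable (fun ω => Qhat (S ω) (A₁ ω) ^ 2 * ‖g (S ω) (A₁ ω)‖ ^ 2)
      (ℙ : Measure Ω) := by
    refine intb _ (CQ ^ 2 * Cg ^ 2) ((hqhm.pow_const 2).mul hGnm) fun ω => ?_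
    rw [abs_mul, abs_pow, abs_of_nonneg (by positivity : (0:ℝ) ≤ ‖g (S ω) (A₁ ω)‖ ^ 2)]
    exact mul_le_mul (pow_le_pow_left₀ (abs_nonneg _) (hQhbd _ _) 2) (bGn ω)
      (by positivity) (by positivity)
  have i3 : Integrable (fun ω => Q (S ω) (A₁ ω) (A₂ ω)
      * (Qhat (S ω) (A₁ ω) * ‖g (S ω) (A₁ ω)‖ ^ 2)) (ℙ : Measure Ω) := by
    refine intb _ (CQ * (CQ * Cg ^ 2)) (hqm.mul (hqhm.mul hGnm)) fun ω => ?_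
    rw [abs_mul, abs_mul, abs_of_nonneg (by positivity : (0:ℝ) ≤ ‖g (S ω) (A₁ ω)‖ ^ 2)]
    refine mul_le_mul (hQbd _ _ _) ?_ (by positivity) hCQ
    exact mul_le_mul (hQhbd _ _) (bGn ω) (by positivity) hCQ
  have i4 : Integrable (fun ω => Qhat (S ω) (A₁ ω)
      * (Qhat (S ω) (A₁ ω) * ‖g (S ω) (A₁ ω)‖ ^ 2)) (ℙ : Measure Ω) := by
    refine intb _ (CQ * (CQ * Cg ^ 2)) (hqhm.mul (hqhm.mul hGnm)) fun ω => ?_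
    rw [abs_mul, abs_mul, abs_of_nonneg (by positivity : (0:ℝ) ≤ ‖g (S ω) (A₁ ω)‖ ^ 2)]
    refine mul_le_mul (hQhbd _ _) ?_ (by positivity) hCQ
    exact mul_le_mul (hQhbd _ _) (bGn ω) (by positivity) hCQ
  -- norms of smul
  have hnorm1 : ∀ (c : ℝ) (x : EuclideanSpace ℝ (Fin n)), ‖c • x‖ ^ 2 = c ^ 2 * ‖x‖ ^ 2 := by
    intro c x
    rw [norm_smul, mul_pow, Real.norm_eq_abs, sq_abs]
  -- expansion of the square
  have i24 : ∫ ω, Qhat (S ω) (A₁ ω) * (Qhat (S ω) (A₁ ω) * ‖g (S ω) (A₁ ω)‖ ^ 2)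
        ∂(ℙ : Measure Ω)
      = ∫ ω, Qhat (S ω) (A₁ ω) ^ 2 * ‖g (S ω) (A₁ ω)‖ ^ 2 ∂(ℙ : Measure Ω) := by
    refine integral_congr_ae (Filter.Eventually.of_forall fun ω => ?_)
    ring
  have hsplit : ∫ ω, (Q (S ω) (A₁ ω) (A₂ ω) - Qhat (S ω) (A₁ ω)) ^ 2
        * ‖g (S ω) (A₁ ω)‖ ^ 2 ∂(ℙ : Measure Ω)
      = ∫ ω, Q (S ω) (A₁ ω) (A₂ ω) ^ 2 * ‖g (S ω) (A₁ ω)‖ ^ 2 ∂(ℙ : Measure Ω)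
        - (2 * ∫ ω, Q (S ω) (A₁ ω) (A₂ ω)
            * (Qhat (S ω) (A₁ ω) * ‖g (S ω) (A₁ ω)‖ ^ 2) ∂(ℙ : Measure Ω)
          - ∫ ω, Qhat (S ω) (A₁ ω) * (Qhat (S ω) (A₁ ω) * ‖g (S ω) (A₁ ω)‖ ^ 2)
            ∂(ℙ : Measure Ω)) := by
    have hsub1 : Integrable (fun ω => 2 * (Q (S ω) (A₁ ω) (A₂ ω)
        * (Qhat (S ω) (A₁ ω) * ‖g (S ω) (A₁ ω)‖ ^ 2))
        - Qhat (S ω) (A₁ ω) * (Qhat (S ω) (A₁ ω) * ‖g (S ω) (A₁ ω)‖ ^ 2)) (ℙ : Measure Ω) :=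
      (i3.const_mul 2).sub i4
    have h5 : ∫ ω, (Q (S ω) (A₁ ω) (A₂ ω) - Qhat (S ω) (A₁ ω)) ^ 2 * ‖g (S ω) (A₁ ω)‖ ^ 2
          ∂(ℙ : Measure Ω)
        = ∫ ω, (Q (S ω) (A₁ ω) (A₂ ω) ^ 2 * ‖g (S ω) (A₁ ω)‖ ^ 2
            - (2 * (Q (S ω) (A₁ ω) (A₂ ω) * (Qhat (S ω) (A₁ ω) * ‖g (S ω) (A₁ ω)‖ ^ 2))
              - Qhat (S ω) (A₁ ω) * (Qhat (S ω) (A₁ ω) * ‖g (S ω) (A₁ ω)‖ ^ 2)))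
          ∂(ℙ : Measure Ω) := by
      refine integral_congr_ae (Filter.Eventually.of_forall fun ω => ?_)
      ring
    rw [h5, integral_sub i1 hsub1, integral_sub (i3.const_mul 2) i4, integral_const_mul]
  unfold tVar
  simp only [hnorm1]
  rw [e1]
  rw [hsplit, e2, i24]
  ring
end

section
/- Under the setup of the previous two statements, if additionally M := sup_{s,a} ‖g(s,a₁)‖ < ∞ and N := inf_{s,a} ‖g(s,a₁)‖, then N²·E[(Q(S,A) − Q̂(S,A₁))²] ≤ tVar(Q·g) − tVar(Q̂·g) ≤ M²·E[(Q(S,A) − Q̂(S,A₁))²]. -/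
open MeasureTheory ProbabilityTheory

section Aux
variable {Ω : Type*} [hΩ : MeasureSpace Ω] [StandardBorelSpace Ω] [Nonempty Ω]
    [IsProbabilityMeasure (ℙ : Measure Ω)]
    {𝒮 𝒜₁ 𝒜₂ : Type*} [MeasurableSpace 𝒮] [MeasurableSpace 𝒜₁] [MeasurableSpace 𝒜₂]
    [StandardBorelSpace 𝒜₂] [Nonempty 𝒜₂]
    {S : Ω → 𝒮} {A₁ : Ω → 𝒜₁} {A₂ : Ω → 𝒜₂}
lemma core_rect (hS : Measurable S) (hA₁ : Measurable A₁) (hA₂ : Measurable A₂)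
    (hci : CondIndepFun (MeasurableSpace.comap S inferInstance) hS.comap_le A₁ A₂ ℙ)
    {s : Set 𝒮} {t : Set 𝒜₁} {u : Set 𝒜₂}
    (hs : MeasurableSet s) (ht : MeasurableSet t) (hu : MeasurableSet u) :
    ℙ (S ⁻¹' s ∩ A₁ ⁻¹' t ∩ A₂ ⁻¹' u)
      = ∫⁻ ω in S ⁻¹' s ∩ A₁ ⁻¹' t, condDistrib A₂ S ℙ (S ω) u ∂ℙ := by
  have hm' : MeasurableSpace.comap S inferInstance ≤ hΩ.toMeasurableSpace := hS.comap_le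
  set κ := condDistrib A₂ S ℙ with hκdef
  set h₂ : Ω → ℝ := fun ω => (κ (S ω) u).toReal with hh₂def
  set indt : Ω → ℝ := (A₁ ⁻¹' t).indicator (fun _ => (1:ℝ)) with hindtdef
  set indtu : Ω → ℝ := (A₁ ⁻¹' t ∩ A₂ ⁻¹' u).indicator (fun _ => (1:ℝ)) with hindtudef
  have h₂meas : Measurable h₂ := ((κ.measurable_coe hu).comp hS).ennreal_toReal
  have h₂m' : StronglyMeasurable[MeasurableSpace.comap S inferInstance] h₂ :=
    ((measurable_condDistrib (μ := ℙ) hu).ennreal_toReal).stronglyMeasurable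
  have h₂bd : ∀ ω, ‖h₂ ω‖ ≤ 1 := by
    intro ω
    rw [Real.norm_eq_abs, abs_of_nonneg ENNReal.toReal_nonneg]
    exact ENNReal.toReal_le_of_le_ofReal one_pos.le (by simpa using prob_le_one)
  have h₂int : Integrable h₂ ℙ :=
    (integrable_const (1:ℝ)).mono' h₂meas.aestronglyMeasurable (.of_forall h₂bd)
  have hmul := (condIndepFun_iff_condExp_inter_preimage_eq_mul hA₁ hA₂).mp hci t u ht hu
  have hb := condDistrib_ae_eq_condExp (μ := ℙ) hS hA₂ hu
  have hsS : MeasurableSet[MeasurableSpace.comap S inferInstance] (S ⁻¹' s) := ⟨s, hs, rfl⟩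
  have hIntInd : Integrable indtu ℙ :=
    (integrable_const 1).indicator ((hA₁ ht).inter (hA₂ hu))
  have hIndt : Integrable indt ℙ := (integrable_const 1).indicator (hA₁ ht)
  have hmulint : Integrable (h₂ * indt) ℙ :=
    hIndt.bdd_mul h₂meas.aestronglyMeasurable (.of_forall h₂bd)
  -- real version
  have key : (ℙ (S ⁻¹' s ∩ A₁ ⁻¹' t ∩ A₂ ⁻¹' u)).toReal
      = ∫ ω in S ⁻¹' s ∩ A₁ ⁻¹' t, h₂ ω ∂ℙ := by
    have e1 : (ℙ (S ⁻¹' s ∩ A₁ ⁻¹' t ∩ A₂ ⁻¹' u)).toReal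
        = ∫ ω in S ⁻¹' s, indtu ω ∂ℙ := by
      rw [hindtudef, integral_indicator_const _ ((hA₁ ht).inter (hA₂ hu)), measureReal_def,
        Measure.restrict_apply ((hA₁ ht).inter (hA₂ hu))]
      rw [smul_eq_mul, mul_one]
      congr 2
      ext ω; simp only [Set.mem_inter_iff, Set.mem_preimage]; tauto
    have e2 : ∫ ω in S ⁻¹' s, indtu ω ∂ℙ
        = ∫ ω in S ⁻¹' s,
            (condExp (MeasurableSpace.comap S inferInstance) ℙ indtu) ω ∂ℙ :=
      (setIntegral_condExp hm' hIntInd hsS).symm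
    have e3 : ∫ ω in S ⁻¹' s,
            (condExp (MeasurableSpace.comap S inferInstance) ℙ indtu) ω ∂ℙ
        = ∫ ω in S ⁻¹' s,
            h₂ ω * (condExp (MeasurableSpace.comap S inferInstance) ℙ indt) ω ∂ℙ := by
      refine integral_congr_ae (ae_restrict_of_ae ?_)
      filter_upwards [hmul, hb] with ω h1 h2'
      rw [hindtudef, hindtdef, h1, ← h2']
      simp only [hh₂def, hκdef, Measure.real]; ring
    have hpull : condExp (MeasurableSpace.comap S inferInstance) ℙ (h₂ * indt)
        =ᵐ[ℙ] h₂ * condExp (MeasurableSpace.comap S inferInstance) ℙ indt :=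
      condExp_mul_of_stronglyMeasurable_left h₂m' hmulint hIndt
    have e4 : ∫ ω in S ⁻¹' s,
          h₂ ω * (condExp (MeasurableSpace.comap S inferInstance) ℙ indt) ω ∂ℙ
        = ∫ ω in S ⁻¹' s, (h₂ * indt) ω ∂ℙ := by
      refine Eq.trans ?_ (setIntegral_condExp hm' hmulint hsS)
      refine integral_congr_ae (ae_restrict_of_ae ?_)
      filter_upwards [hpull] with ω hω
      rw [hω]; rfl
    have e5 : ∫ ω in S ⁻¹' s, (h₂ * indt) ω ∂ℙ
        = ∫ ω in S ⁻¹' s ∩ A₁ ⁻¹' t, h₂ ω ∂ℙ := by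
      rw [← setIntegral_indicator (hA₁ ht)]
      refine integral_congr_ae (ae_restrict_of_ae (.of_forall fun ω => ?_))
      by_cases h : ω ∈ A₁ ⁻¹' t <;>
        simp [hindtdef, h, Set.indicator_of_mem, Set.indicator_of_notMem]
    exact e1.trans (e2.trans (e3.trans (e4.trans e5)))
  have hfin : ∫⁻ ω in S ⁻¹' s ∩ A₁ ⁻¹' t, κ (S ω) u ∂ℙ ≠ ⊤ := by
    refine (lt_of_le_of_lt (lintegral_mono fun ω => prob_le_one) ?_).ne
    simp only [lintegral_one, Measure.restrict_apply MeasurableSet.univ, Set.univ_inter]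
    exact measure_lt_top _ _
  have hR : ∫ ω in S ⁻¹' s ∩ A₁ ⁻¹' t, h₂ ω ∂ℙ
      = (∫⁻ ω in S ⁻¹' s ∩ A₁ ⁻¹' t, κ (S ω) u ∂ℙ).toReal :=
    integral_toReal ((κ.measurable_coe hu).comp hS).aemeasurable.restrict
      (.of_forall fun ω => measure_lt_top _ _)
  exact (ENNReal.toReal_eq_toReal_iff' (measure_ne_top _ _) hfin).mp (key.trans hR)
end Aux

section Aux2
variable {Ω : Type*} [hΩ : MeasureSpace Ω] [StandardBorelSpace Ω] [Nonempty Ω]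
    [IsProbabilityMeasure (ℙ : Measure Ω)]
    {𝒮 𝒜₁ 𝒜₂ : Type*} [MeasurableSpace 𝒮] [MeasurableSpace 𝒜₁] [MeasurableSpace 𝒜₂]
    [StandardBorelSpace 𝒜₂] [Nonempty 𝒜₂]
    {S : Ω → 𝒮} {A₁ : Ω → 𝒜₁} {A₂ : Ω → 𝒜₂}

lemma core_measure_eq (hS : Measurable S) (hA₁ : Measurable A₁) (hA₂ : Measurable A₂)
    (hci : CondIndepFun (MeasurableSpace.comap S inferInstance) hS.comap_le A₁ A₂ ℙ) :
    (ℙ : Measure Ω).map (fun ω => ((S ω, A₁ ω), A₂ ω))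
      = ((ℙ : Measure Ω).map (fun ω => (S ω, A₁ ω)))
          ⊗ₘ ((condDistrib A₂ S ℙ).comap Prod.fst measurable_fst) := by
  set κ := condDistrib A₂ S ℙ with hκdef
  have hX : Measurable (fun ω => (S ω, A₁ ω)) := hS.prodMk hA₁
  have hκm : ∀ {u : Set 𝒜₂}, MeasurableSet u →
      Measurable (fun x : 𝒮 × 𝒜₁ => κ x.1 u) :=
    fun hu => (κ.measurable_coe hu).comp measurable_fst
  -- general rectangle identity
  have R : ∀ {u : Set 𝒜₂}, MeasurableSet u → ∀ {E : Set (𝒮 × 𝒜₁)}, MeasurableSet E →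
      ℙ ((fun ω => (S ω, A₁ ω)) ⁻¹' E ∩ A₂ ⁻¹' u)
        = ∫⁻ ω in (fun ω => (S ω, A₁ ω)) ⁻¹' E, κ (S ω) u ∂ℙ := by
    intro u hu E hE
    have hced : ((ℙ : Measure Ω).restrict (A₂ ⁻¹' u)).map (fun ω => (S ω, A₁ ω))
        = ((ℙ : Measure Ω).map (fun ω => (S ω, A₁ ω))).withDensity (fun x => κ x.1 u) := by
      have h1 : IsFiniteMeasure (((ℙ : Measure Ω).restrict (A₂ ⁻¹' u)).map (fun ω => (S ω, A₁ ω))) :=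
        Measure.isFiniteMeasure_map _ _
      refine ext_of_generate_finite _ generateFrom_prod.symm isPiSystem_prod ?_ ?_
      · rintro E' ⟨s, hs, t, ht, rfl⟩
        simp only [Set.mem_setOf_eq] at hs ht
        rw [Measure.map_apply hX (hs.prod ht),
          Measure.restrict_apply (hX (hs.prod ht)),
          withDensity_apply _ (hs.prod ht),
          setLIntegral_map (hs.prod ht) (hκm hu) hX]
        rw [Set.mk_preimage_prod]
        exact core_rect hS hA₁ hA₂ hci hs ht hu
      · rw [Measure.map_apply hX MeasurableSet.univ,
          Measure.restrict_apply (hX MeasurableSet.univ),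
          withDensity_apply _ MeasurableSet.univ,
          setLIntegral_map MeasurableSet.univ (hκm hu) hX]
        simp only [Set.preimage_univ, Set.univ_inter]
        have := core_rect hS hA₁ hA₂ hci MeasurableSet.univ MeasurableSet.univ hu
        simpa using this
    calc ℙ ((fun ω => (S ω, A₁ ω)) ⁻¹' E ∩ A₂ ⁻¹' u)
        = ((ℙ : Measure Ω).restrict (A₂ ⁻¹' u)).map (fun ω => (S ω, A₁ ω)) E := by
          rw [Measure.map_apply hX hE, Measure.restrict_apply (hX hE)]
      _ = ((ℙ : Measure Ω).map (fun ω => (S ω, A₁ ω))).withDensity (fun x => κ x.1 u) E := by rw [hced]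
      _ = ∫⁻ ω in (fun ω => (S ω, A₁ ω)) ⁻¹' E, κ (S ω) u ∂ℙ := by
          rw [withDensity_apply _ hE, setLIntegral_map hE (hκm hu) hX]
  -- main equality
  have h1 : IsProbabilityMeasure ((ℙ : Measure Ω).map (fun ω => ((S ω, A₁ ω), A₂ ω))) :=
    Measure.isProbabilityMeasure_map (hX.prodMk hA₂).aemeasurable
  have h2 : IsProbabilityMeasure ((ℙ : Measure Ω).map (fun ω => (S ω, A₁ ω))) :=
    Measure.isProbabilityMeasure_map hX.aemeasurable
  refine ext_of_generate_finite _ generateFrom_prod.symm isPiSystem_prod ?_ ?_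
  · rintro F ⟨E, hE, u, hu, rfl⟩
    simp only [Set.mem_setOf_eq] at hE hu
    rw [Measure.map_apply (hX.prodMk hA₂) (hE.prod hu),
      Measure.compProd_apply_prod hE hu]
    rw [Set.mk_preimage_prod]
    rw [R hu hE]
    simp only [Kernel.comap_apply']
    rw [setLIntegral_map hE (hκm hu) hX]
  · simp [measure_univ]

lemma core_integral_eq {E : Type*} [NormedAddCommGroup E] [NormedSpace ℝ E] [CompleteSpace E]
    (hS : Measurable S) (hA₁ : Measurable A₁) (hA₂ : Measurable A₂)
    (hci : CondIndepFun (MeasurableSpace.comap S inferInstance) hS.comap_le A₁ A₂ ℙ)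
    (F : (𝒮 × 𝒜₁) × 𝒜₂ → E) (hF : StronglyMeasurable F) (C : ℝ) (hC : ∀ p, ‖F p‖ ≤ C) :
    ∫ ω, F ((S ω, A₁ ω), A₂ ω) ∂(ℙ : Measure Ω)
      = ∫ ω, ∫ a₂, F ((S ω, A₁ ω), a₂) ∂(condDistrib A₂ S ℙ (S ω)) ∂(ℙ : Measure Ω) := by
  set κ := condDistrib A₂ S ℙ with hκdef
  set η := κ.comap (Prod.fst : 𝒮 × 𝒜₁ → 𝒮) measurable_fst with hηdef
  have hX : Measurable fun ω => (S ω, A₁ ω) := hS.prodMk hA₁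
  have hXY : Measurable fun ω => ((S ω, A₁ ω), A₂ ω) := hX.prodMk hA₂
  have hmap := core_measure_eq hS hA₁ hA₂ hci
  have h1 : ∫ ω, F ((S ω, A₁ ω), A₂ ω) ∂(ℙ : Measure Ω)
      = ∫ p, F p ∂((ℙ : Measure Ω).map (fun ω => ((S ω, A₁ ω), A₂ ω))) :=
    (integral_map hXY.aemeasurable hF.aestronglyMeasurable).symm
  have hprob : IsProbabilityMeasure ((ℙ : Measure Ω).map fun ω => ((S ω, A₁ ω), A₂ ω)) :=
    Measure.isProbabilityMeasure_map hXY.aemeasurable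
  have hFi : Integrable F ((ℙ : Measure Ω).map fun ω => ((S ω, A₁ ω), A₂ ω)) :=
    (integrable_const C).mono' hF.aestronglyMeasurable (.of_forall hC)
  have hFi' : Integrable F (((ℙ : Measure Ω).map (fun ω => (S ω, A₁ ω))) ⊗ₘ η) := hmap ▸ hFi
  have hsm : StronglyMeasurable (fun x : 𝒮 × 𝒜₁ => ∫ y, F (x, y) ∂η x) :=
    hF.integral_kernel_prod_right'
  rw [h1, hmap, Measure.integral_compProd hFi',
    integral_map hX.aemeasurable hsm.aestronglyMeasurable]
  refine integral_congr_ae (.of_forall fun ω => ?_)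
  simp only [hηdef, Kernel.comap_apply]

end Aux2

/-- With `A₁, A₂` conditionally independent given `S`,
`Q̂(s,a₁) = E[Q(s,a₁,A₂) | S = s]`, `g` depending only on `(S, A₁)`,
`N ≤ ‖g‖ ≤ M` everywhere (with `N ≥ 0`):
`N² E[(Q−Q̂)²] ≤ tVar (Q • g) − tVar (Q̂ • g) ≤ M² E[(Q−Q̂)²]`. -/
theorem total_variance_gap_bounds
    {Ω : Type*} [hΩ : MeasureSpace Ω] [StandardBorelSpace Ω] [Nonempty Ω]
    [IsProbabilityMeasure (ℙ : Measure Ω)]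
    {𝒮 𝒜₁ 𝒜₂ : Type*} [MeasurableSpace 𝒮] [MeasurableSpace 𝒜₁] [MeasurableSpace 𝒜₂]
    [StandardBorelSpace 𝒜₂] [Nonempty 𝒜₂] {n : ℕ}
    (S : Ω → 𝒮) (A₁ : Ω → 𝒜₁) (A₂ : Ω → 𝒜₂)
    (hS : Measurable S) (hA₁ : Measurable A₁) (hA₂ : Measurable A₂)
    (Q : 𝒮 → 𝒜₁ → 𝒜₂ → ℝ) (g : 𝒮 → 𝒜₁ → EuclideanSpace ℝ (Fin n))
    (hQmeas : Measurable fun p : 𝒮 × 𝒜₁ × 𝒜₂ => Q p.1 p.2.1 p.2.2)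
    (hgmeas : Measurable fun p : 𝒮 × 𝒜₁ => g p.1 p.2)
    (CQ : ℝ) (hQbd : ∀ s a₁ a₂, |Q s a₁ a₂| ≤ CQ)
    (hci : CondIndepFun (MeasurableSpace.comap S inferInstance) (hS.comap_le) A₁ A₂ ℙ)
    (Qhat : 𝒮 → 𝒜₁ → ℝ)
    (hQhat : ∀ s a₁, Qhat s a₁ = ∫ a₂, Q s a₁ a₂ ∂(condDistrib A₂ S ℙ s))
    (M N : ℝ) (hN0 : 0 ≤ N)
    (hM : ∀ s a₁, ‖g s a₁‖ ≤ M) (hN : ∀ s a₁, N ≤ ‖g s a₁‖) :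
    N ^ 2 * (∫ ω, (Q (S ω) (A₁ ω) (A₂ ω) - Qhat (S ω) (A₁ ω)) ^ 2 ∂(ℙ : Measure Ω))
      ≤ tVar (fun ω => Q (S ω) (A₁ ω) (A₂ ω) • g (S ω) (A₁ ω))
          - tVar (fun ω => Qhat (S ω) (A₁ ω) • g (S ω) (A₁ ω))
    ∧ tVar (fun ω => Q (S ω) (A₁ ω) (A₂ ω) • g (S ω) (A₁ ω))
          - tVar (fun ω => Qhat (S ω) (A₁ ω) • g (S ω) (A₁ ω))
      ≤ M ^ 2 * (∫ ω, (Q (S ω) (A₁ ω) (A₂ ω) - Qhat (S ω) (A₁ ω)) ^ 2 ∂(ℙ : Measure Ω)) := by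
  classical
  set κ := condDistrib A₂ S ℙ with hκdef
  set η := κ.comap (Prod.fst : 𝒮 × 𝒜₁ → 𝒮) measurable_fst with hηdef
  obtain ⟨ω₀⟩ := (inferInstance : Nonempty Ω)
  have hCQ0 : 0 ≤ CQ := (abs_nonneg _).trans (hQbd (S ω₀) (A₁ ω₀) (A₂ ω₀))
  have hM0 : 0 ≤ M := (norm_nonneg _).trans (hM (S ω₀) (A₁ ω₀))
  set q : Ω → ℝ := fun ω => Q (S ω) (A₁ ω) (A₂ ω) with hqdef
  set qh : Ω → ℝ := fun ω => Qhat (S ω) (A₁ ω) with hqhdef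
  set G : Ω → EuclideanSpace ℝ (Fin n) := fun ω => g (S ω) (A₁ ω) with hGdef
  have hq : Measurable q := hQmeas.comp (hS.prodMk (hA₁.prodMk hA₂))
  have hG : Measurable G := hgmeas.comp (hS.prodMk hA₁)
  -- measurability of Qhat
  have hQP : Measurable (fun p : 𝒮 × 𝒜₁ => Qhat p.1 p.2) := by
    have h1 : StronglyMeasurable (fun p : (𝒮 × 𝒜₁) × 𝒜₂ => Q p.1.1 p.1.2 p.2) :=
      (hQmeas.comp ((measurable_fst.fst).prodMk
        ((measurable_fst.snd).prodMk measurable_snd))).stronglyMeasurable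
    have h2 : StronglyMeasurable (fun x : 𝒮 × 𝒜₁ =>
        ∫ a₂, Q x.1 x.2 a₂ ∂(η x)) :=
      h1.integral_kernel_prod_right'
    have : (fun p : 𝒮 × 𝒜₁ => Qhat p.1 p.2) = fun x : 𝒮 × 𝒜₁ =>
        ∫ a₂, Q x.1 x.2 a₂ ∂(η x) := by
      funext x
      rw [Kernel.comap_apply, hQhat]
    rw [this]
    exact h2.measurable
  have hqh : Measurable qh := hQP.comp (hS.prodMk hA₁)
  -- integrability of Q against the kernel
  have hQa₂ : ∀ s a₁, Integrable (fun a₂ => Q s a₁ a₂) (κ s) := by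
    intro s a₁
    have hm : Measurable (fun a₂ => Q s a₁ a₂) :=
      hQmeas.comp (measurable_const.prodMk (measurable_const.prodMk measurable_id))
    exact (integrable_const CQ).mono' hm.aestronglyMeasurable
      (.of_forall fun a₂ => by rw [Real.norm_eq_abs]; exact hQbd s a₁ a₂)
  -- bound on Qhat
  have hqhbd : ∀ s a₁, |Qhat s a₁| ≤ CQ := by
    intro s a₁
    rw [hQhat, ← Real.norm_eq_abs]
    calc ‖∫ a₂, Q s a₁ a₂ ∂(κ s)‖ ≤ CQ * ((κ s) Set.univ).toReal :=
          norm_integral_le_of_norm_le_const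
            (.of_forall fun a₂ => by rw [Real.norm_eq_abs]; exact hQbd s a₁ a₂)
      _ = CQ := by simp
  -- Fact 1 : means agree
  have fact1 : ∫ ω, q ω • G ω ∂(ℙ : Measure Ω) = ∫ ω, qh ω • G ω ∂(ℙ : Measure Ω) := by
    have hF : StronglyMeasurable (fun p : (𝒮 × 𝒜₁) × 𝒜₂ =>
        Q p.1.1 p.1.2 p.2 • g p.1.1 p.1.2) :=
      ((hQmeas.comp ((measurable_fst.fst).prodMk
        ((measurable_fst.snd).prodMk measurable_snd))).stronglyMeasurable).smul
        ((hgmeas.comp measurable_fst).stronglyMeasurable)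
    have hbd : ∀ p : (𝒮 × 𝒜₁) × 𝒜₂, ‖Q p.1.1 p.1.2 p.2 • g p.1.1 p.1.2‖ ≤ CQ * M := by
      intro p
      rw [norm_smul, Real.norm_eq_abs]
      exact mul_le_mul (hQbd _ _ _) (hM _ _) (norm_nonneg _) hCQ0
    have := core_integral_eq hS hA₁ hA₂ hci _ hF (CQ * M) hbd
    rw [this]
    refine integral_congr_ae (.of_forall fun ω => ?_)
    simp only
    rw [integral_smul_const, ← hQhat]
  -- Fact 0 : cross term vanishes
  have fact0 : ∫ ω, qh ω * ‖G ω‖ ^ 2 * (q ω - qh ω) ∂(ℙ : Measure Ω) = 0 := by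
    have hF : StronglyMeasurable (fun p : (𝒮 × 𝒜₁) × 𝒜₂ =>
        Qhat p.1.1 p.1.2 * ‖g p.1.1 p.1.2‖ ^ 2 * (Q p.1.1 p.1.2 p.2 - Qhat p.1.1 p.1.2)) := by
      have hQ' : Measurable (fun p : (𝒮 × 𝒜₁) × 𝒜₂ => Q p.1.1 p.1.2 p.2) :=
        hQmeas.comp ((measurable_fst.fst).prodMk
          ((measurable_fst.snd).prodMk measurable_snd))
      have hqh' : Measurable (fun p : (𝒮 × 𝒜₁) × 𝒜₂ => Qhat p.1.1 p.1.2) :=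
        hQP.comp measurable_fst
      have hg' : Measurable (fun p : (𝒮 × 𝒜₁) × 𝒜₂ => ‖g p.1.1 p.1.2‖ ^ 2) :=
        ((hgmeas.comp measurable_fst).norm.pow_const 2)
      exact ((hqh'.mul hg').mul (hQ'.sub hqh')).stronglyMeasurable
    have hbd : ∀ p : (𝒮 × 𝒜₁) × 𝒜₂,
        ‖Qhat p.1.1 p.1.2 * ‖g p.1.1 p.1.2‖ ^ 2 * (Q p.1.1 p.1.2 p.2 - Qhat p.1.1 p.1.2)‖
          ≤ CQ * M ^ 2 * (CQ + CQ) := by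
      intro p
      rw [Real.norm_eq_abs, abs_mul, abs_mul]
      have h1 : |Qhat p.1.1 p.1.2| ≤ CQ := hqhbd _ _
      have h2 : |(‖g p.1.1 p.1.2‖ ^ 2 : ℝ)| ≤ M ^ 2 := by
        rw [abs_of_nonneg (by positivity)]
        exact pow_le_pow_left₀ (norm_nonneg _) (hM _ _) 2
      have h3 : |Q p.1.1 p.1.2 p.2 - Qhat p.1.1 p.1.2| ≤ CQ + CQ :=
        (abs_sub _ _).trans (add_le_add (hQbd _ _ _) (hqhbd _ _))
      have hMn : (0:ℝ) ≤ M ^ 2 := by positivity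
      exact mul_le_mul (mul_le_mul h1 h2 (abs_nonneg _) hCQ0) h3 (abs_nonneg _)
        (by positivity)
    have h := core_integral_eq hS hA₁ hA₂ hci _ hF (CQ * M ^ 2 * (CQ + CQ)) hbd
    rw [h]
    have : ∀ ω, (∫ a₂, Qhat (S ω) (A₁ ω) * ‖g (S ω) (A₁ ω)‖ ^ 2
        * (Q (S ω) (A₁ ω) a₂ - Qhat (S ω) (A₁ ω)) ∂(κ (S ω))) = 0 := by
      intro ω
      rw [integral_const_mul, integral_sub (hQa₂ _ _) (integrable_const _)]
      rw [← hQhat]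
      simp
    exact integral_eq_zero_of_ae (.of_forall this)
  -- integrability facts
  have hdbd : ∀ ω, |q ω - qh ω| ≤ CQ + CQ := fun ω =>
    (abs_sub _ _).trans (add_le_add (hQbd _ _ _) (hqhbd _ _))
  have hdsq : ∀ ω, (q ω - qh ω) ^ 2 ≤ (CQ + CQ) ^ 2 := fun ω => by
    rw [← sq_abs]
    exact pow_le_pow_left₀ (abs_nonneg _) (hdbd ω) 2
  have hG2 : ∀ ω, ‖G ω‖ ^ 2 ≤ M ^ 2 := fun ω =>
    pow_le_pow_left₀ (norm_nonneg _) (hM _ _) 2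
  have hdmeas : Measurable (fun ω => (q ω - qh ω) ^ 2) := (hq.sub hqh).pow_const 2
  have hG2meas : Measurable (fun ω => ‖G ω‖ ^ 2) := hG.norm.pow_const 2
  have int1 : Integrable (fun ω => (q ω - qh ω) ^ 2) (ℙ : Measure Ω) :=
    (integrable_const ((CQ + CQ) ^ 2)).mono' hdmeas.aestronglyMeasurable
      (.of_forall fun ω => by
        rw [Real.norm_eq_abs, abs_of_nonneg (sq_nonneg _)]; exact hdsq ω)
  have int2 : Integrable (fun ω => (q ω - qh ω) ^ 2 * ‖G ω‖ ^ 2) (ℙ : Measure Ω) :=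
    (integrable_const ((CQ + CQ) ^ 2 * M ^ 2)).mono'
      (hdmeas.mul hG2meas).aestronglyMeasurable
      (.of_forall fun ω => by
        rw [Real.norm_eq_abs, abs_of_nonneg (by positivity)]
        exact mul_le_mul (hdsq ω) (hG2 ω) (by positivity) (by positivity))
  have int3 : Integrable (fun ω => qh ω ^ 2 * ‖G ω‖ ^ 2) (ℙ : Measure Ω) :=
    (integrable_const (CQ ^ 2 * M ^ 2)).mono'
      ((hqh.pow_const 2).mul hG2meas).aestronglyMeasurable
      (.of_forall fun ω => by
        rw [Real.norm_eq_abs, abs_of_nonneg (by positivity)]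
        refine mul_le_mul ?_ (hG2 ω) (by positivity) (by positivity)
        rw [← sq_abs]
        exact pow_le_pow_left₀ (abs_nonneg _) (hqhbd _ _) 2)
  have int4 : Integrable (fun ω => 2 * (qh ω * ‖G ω‖ ^ 2 * (q ω - qh ω))) (ℙ : Measure Ω) :=
    (integrable_const (2 * (CQ * M ^ 2 * (CQ + CQ)))).mono'
      ((((hqh.mul hG2meas).mul (hq.sub hqh))).const_mul 2).aestronglyMeasurable
      (.of_forall fun ω => by
        rw [Real.norm_eq_abs, abs_mul, abs_mul, abs_mul, abs_of_nonneg (by norm_num : (0:ℝ) ≤ 2),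
          abs_of_nonneg (sq_nonneg ‖G ω‖)]
        refine mul_le_mul_of_nonneg_left ?_ (by norm_num)
        exact mul_le_mul (mul_le_mul (hqhbd _ _) (hG2 ω) (sq_nonneg _) hCQ0)
          (hdbd ω) (abs_nonneg _) (by positivity))
  -- main identity on second moments
  have key : (∫ ω, ‖q ω • G ω‖ ^ 2 ∂(ℙ : Measure Ω))
      - (∫ ω, ‖qh ω • G ω‖ ^ 2 ∂(ℙ : Measure Ω))
      = ∫ ω, (q ω - qh ω) ^ 2 * ‖G ω‖ ^ 2 ∂(ℙ : Measure Ω) := by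
    have e1 : ∀ ω, ‖q ω • G ω‖ ^ 2
        = (q ω - qh ω) ^ 2 * ‖G ω‖ ^ 2
          + (2 * (qh ω * ‖G ω‖ ^ 2 * (q ω - qh ω)) + qh ω ^ 2 * ‖G ω‖ ^ 2) := fun ω => by
      rw [norm_smul, mul_pow, Real.norm_eq_abs, sq_abs]; ring
    have e2 : ∀ ω, ‖qh ω • G ω‖ ^ 2 = qh ω ^ 2 * ‖G ω‖ ^ 2 := fun ω => by
      rw [norm_smul, mul_pow, Real.norm_eq_abs, sq_abs]
    have i23 : Integrable (fun ω => 2 * (qh ω * ‖G ω‖ ^ 2 * (q ω - qh ω))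
        + qh ω ^ 2 * ‖G ω‖ ^ 2) (ℙ : Measure Ω) := int4.add int3
    rw [integral_congr_ae (.of_forall e1), integral_congr_ae (.of_forall e2),
      integral_add int2 i23, integral_add int4 int3]
    have hz : ∫ ω, 2 * (qh ω * ‖G ω‖ ^ 2 * (q ω - qh ω)) ∂(ℙ : Measure Ω) = 0 := by
      rw [integral_const_mul, fact0, mul_zero]
    rw [hz]
    ring
  -- tVar difference
  have tdiff : tVar (fun ω => q ω • G ω) - tVar (fun ω => qh ω • G ω)
      = ∫ ω, (q ω - qh ω) ^ 2 * ‖G ω‖ ^ 2 ∂(ℙ : Measure Ω) := by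
    simp only [tVar]
    rw [fact1]
    linarith [key]
  constructor
  · have hle : ∀ ω, N ^ 2 * (q ω - qh ω) ^ 2 ≤ (q ω - qh ω) ^ 2 * ‖G ω‖ ^ 2 := fun ω => by
      rw [mul_comm]
      exact mul_le_mul_of_nonneg_left (pow_le_pow_left₀ hN0 (hN _ _) 2) (sq_nonneg _)
    calc N ^ 2 * ∫ ω, (q ω - qh ω) ^ 2 ∂(ℙ : Measure Ω)
        = ∫ ω, N ^ 2 * (q ω - qh ω) ^ 2 ∂(ℙ : Measure Ω) := (integral_const_mul _ _).symm
      _ ≤ ∫ ω, (q ω - qh ω) ^ 2 * ‖G ω‖ ^ 2 ∂(ℙ : Measure Ω) :=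
          integral_mono (int1.const_mul _) int2 hle
      _ = _ := tdiff.symm
  · have hle : ∀ ω, (q ω - qh ω) ^ 2 * ‖G ω‖ ^ 2 ≤ M ^ 2 * (q ω - qh ω) ^ 2 := fun ω => by
      rw [mul_comm (M ^ 2)]
      exact mul_le_mul_of_nonneg_left (hG2 ω) (sq_nonneg _)
    calc tVar (fun ω => q ω • G ω) - tVar (fun ω => qh ω • G ω)
        = ∫ ω, (q ω - qh ω) ^ 2 * ‖G ω‖ ^ 2 ∂(ℙ : Measure Ω) := tdiff
      _ ≤ ∫ ω, M ^ 2 * (q ω - qh ω) ^ 2 ∂(ℙ : Measure Ω) :=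
          integral_mono int2 (int1.const_mul _) hle
      _ = M ^ 2 * ∫ ω, (q ω - qh ω) ^ 2 ∂(ℙ : Measure Ω) := integral_const_mul _ _
end
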